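/- arXiv:2303.13185 — 2 statements merged into one kernel-verified Lean document; each statement's English description precedes it below -/
import Mathlib

section
/- There exists a constant c such that for every binary string x, C^{B(C(x)+c)}(x) = C(x); that is, the nonincreasing function k ↦ C^{B(k)}(x) stabilizes at the value C(x) no later than k = C(x) + c. -/
open scoped Classical

/-- Binary strings: finite sequences over `{0,1}`. -/
abbrev BStr := List Bool

/-- Complexity of `x` with respect to the description method `D`:
the minimal length of a `p` with `D(p) = x`, as an extended natural
(`⊤` if no such `p` exists). -/
noncomputable def Cw (D : BStr →. BStr) (x : BStr) : ℕ∞ :=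
  ⨅ (p : BStr) (_ : x ∈ D p), (p.length : ℕ∞)

/-- A description method is optimal if it is partial computable and gives
complexity at most that of any other partial computable description method,
up to an additive constant. -/
def OptimalDM (D : BStr →. BStr) : Prop :=
  Partrec D ∧ ∀ D' : BStr →. BStr, Partrec D' →
    ∃ c : ℕ, ∀ x : BStr, Cw D x ≤ Cw D' x + (c : ℕ∞)

/-- Plain Kolmogorov complexity (finite value) w.r.t. a description method. -/
noncomputable def C (D : BStr →. BStr) (x : BStr) : ℕ := (Cw D x).toNat

/-- Conditional complexity of `x` given `y` w.r.t. the conditional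
description method `E`. -/
noncomputable def CwCond (E : BStr → BStr →. BStr) (x y : BStr) : ℕ∞ :=
  ⨅ (p : BStr) (_ : x ∈ E p y), (p.length : ℕ∞)

/-- Optimal conditional description method. -/
def OptimalCDM (E : BStr → BStr →. BStr) : Prop :=
  Partrec₂ E ∧ ∀ E' : BStr → BStr →. BStr, Partrec₂ E' →
    ∃ c : ℕ, ∀ x y : BStr, CwCond E x y ≤ CwCond E' x y + (c : ℕ∞)

/-- Conditional Kolmogorov complexity (finite value). -/
noncomputable def Ccond (E : BStr → BStr →. BStr) (x y : BStr) : ℕ :=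
  (CwCond E x y).toNat

/-- `enc` is a computable injective encoding of finite sets of binary strings
as binary strings (computability is expressed on the level of lists of
elements, since every finite set is the set of members of a list). -/
def SetEncoding (enc : Finset BStr → BStr) : Prop :=
  Function.Injective enc ∧ Computable (fun l : List BStr => enc l.toFinset)

/-- A computable step-counting semantics for the description method `D`:
`ev t p` is the output of `D` on program `p` within `t` computation steps
(`none` if the computation has not converged within `t` steps). -/
structure TimedDM (D : BStr →. BStr) where
  ev : ℕ → BStr → Option BStr
  computable : Computable₂ ev
  mono : ∀ {t t' : ℕ} {p y : BStr}, t ≤ t' → ev t p = some y → ev t' p = some y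
  spec : ∀ p y : BStr, y ∈ D p ↔ ∃ t : ℕ, ev t p = some y

/-- Time-bounded complexity `C^t(x)`: the minimal length of a program
producing `x` within `t` steps (`⊤` if there is none). -/
noncomputable def Cwt (ev : ℕ → BStr → Option BStr) (t : ℕ) (x : BStr) : ℕ∞ :=
  ⨅ (p : BStr) (_ : ev t p = some x), (p.length : ℕ∞)

/-- `B D k`: the largest natural number whose binary representation has
complexity at most `k` (naturals are identified with their binary
representations via `Nat.bits`). -/
noncomputable def B (D : BStr →. BStr) (k : ℕ) : ℕ :=
  sSup {m : ℕ | Cw D (Nat.bits m) ≤ (k : ℕ∞)}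

/-- Kolmogorov's `(α,β)`-stochasticity: `x` belongs to a finite set `S` of
complexity at most `α` in which it is random up to `β`. -/
def Stochastic (D : BStr →. BStr) (enc : Finset BStr → BStr)
    (α β : ℕ) (x : BStr) : Prop :=
  ∃ S : Finset BStr, x ∈ S ∧ C D (enc S) ≤ α ∧
    Real.logb 2 S.card - β ≤ (C D x : ℝ)

/-- The binary entropy function (with the convention `H(0) = H(1) = 0`,
which holds automatically since `logb 2 0 = 0` in Mathlib). -/
noncomputable def binH (p : ℝ) : ℝ :=
  -(p * Real.logb 2 p) - (1 - p) * Real.logb 2 (1 - p)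


set_option maxHeartbeats 1000000 in
lemma primrec_two_pow : Primrec (fun k : ℕ => 2 ^ k) := by
  have h := Primrec.nat_iterate (Primrec.id : Primrec (id : ℕ → ℕ))
    (Primrec.const 1)
    ((Primrec.nat_mul.comp (Primrec.const 2) Primrec.snd).to₂ :
      Primrec₂ fun (_ : ℕ) (x : ℕ) => 2 * x)
  have key : ∀ k : ℕ, (fun x : ℕ => 2 * x)^[k] 1 = 2 ^ k := by
    intro k
    induction k with
    | zero => simp
    | succ n ih => rw [Function.iterate_succ_apply', ih]; ring
  exact h.of_eq fun k => key k

/-- The auxiliary description method: on program `p`, find the least halting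
time `t` of `p` (w.r.t. the step semantics `ev`) and output the binary
representation of `t`. -/
def timeDM (ev : ℕ → BStr → Option BStr) : BStr →. BStr :=
  fun p => (Nat.rfind fun t => Part.some (ev t p).isSome).bind fun t =>
    (Nat.rfind fun k => Part.some (decide (t < 2 ^ k))).map fun k =>
      (List.range k).map t.testBit

set_option maxHeartbeats 1000000 in
lemma timeDM_partrec {ev : ℕ → BStr → Option BStr} (hev : Computable₂ ev) :
    Partrec (timeDM ev) := by
  have h1 : Partrec fun p : BStr => Nat.rfind fun t => Part.some (ev t p).isSome := by
    apply Partrec.rfind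
    exact ((Primrec.option_isSome.to_comp.comp
      (hev.comp Computable.snd Computable.fst)).to₂ :
        Computable₂ fun (p : BStr) (t : ℕ) => (ev t p).isSome).partrec₂
  apply h1.bind
  have h2 : Partrec fun q : BStr × ℕ =>
      Nat.rfind fun k => Part.some (decide (q.2 < 2 ^ k)) := by
    apply Partrec.rfind
    have : Primrec fun r : (BStr × ℕ) × ℕ => decide (r.1.2 < 2 ^ r.2) :=
      (Primrec.nat_lt.comp (Primrec.snd.comp Primrec.fst)
        (primrec_two_pow.comp Primrec.snd)).decide
    exact (this.to_comp.to₂ :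
      Computable₂ fun (q : BStr × ℕ) (k : ℕ) => decide (q.2 < 2 ^ k)).partrec₂
  apply h2.map
  have ha : Primrec fun s : ((BStr × ℕ) × ℕ) × ℕ => s.1.1.2 :=
    Primrec.snd.comp (Primrec.fst.comp Primrec.fst)
  have hb : Primrec fun s : ((BStr × ℕ) × ℕ) × ℕ => (2 : ℕ) ^ s.2 :=
    primrec_two_pow.comp Primrec.snd
  have hdiv : Primrec fun s : ((BStr × ℕ) × ℕ) × ℕ => s.1.1.2 / 2 ^ s.2 % 2 :=
    Primrec.nat_mod.comp (Primrec.nat_div.comp ha hb) (Primrec.const 2)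
  have htb : Primrec₂ fun (r : (BStr × ℕ) × ℕ) (i : ℕ) => r.1.2.testBit i := by
    have := (Primrec.eq.comp hdiv (Primrec.const 1)).decide.to₂
      (α := (BStr × ℕ) × ℕ) (β := ℕ)
    exact this.of_eq fun r i => by rw [Nat.testBit_eq_decide_div_mod_eq]
  have : Primrec fun r : (BStr × ℕ) × ℕ => (List.range r.2).map r.1.2.testBit :=
    Primrec.list_map (Primrec.list_range.comp Primrec.snd) htb
  exact this.to_comp.to₂.of_eq fun n => rfl

lemma cw_le {D : BStr →. BStr} {x p : BStr} (h : x ∈ D p) :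
    Cw D x ≤ (p.length : ℕ∞) := iInf_le_of_le p (iInf_le _ h)

lemma cwt_le {ev : ℕ → BStr → Option BStr} {t : ℕ} {x p : BStr}
    (h : ev t p = some x) : Cwt ev t x ≤ (p.length : ℕ∞) :=
  iInf_le_of_le p (iInf_le _ h)

lemma cw_exists {D : BStr →. BStr} {x : BStr} (h : Cw D x ≠ ⊤) :
    ∃ p, x ∈ D p ∧ (p.length : ℕ∞) = Cw D x := by
  have hne : ∃ p, x ∈ D p := by
    by_contra hc
    push_neg at hc
    apply h
    simp [Cw, hc]
  have hS : ∃ n : ℕ, ∃ p, x ∈ D p ∧ p.length = n := by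
    obtain ⟨p, hp⟩ := hne; exact ⟨p.length, p, hp, rfl⟩
  obtain ⟨p, hp, hlen⟩ := Nat.find_spec hS
  refine ⟨p, hp, le_antisymm ?_ (cw_le hp)⟩
  refine le_iInf₂ fun q hq => ?_
  have : Nat.find hS ≤ q.length := Nat.find_min' hS ⟨q, hq, rfl⟩
  exact_mod_cast hlen ▸ this

lemma cw_ne_top {D : BStr →. BStr} (hD : OptimalDM D) (x : BStr) :
    Cw D x ≠ ⊤ := by
  obtain ⟨c, hc⟩ := hD.2 (fun p => Part.some p)
    (Computable.id.partrec : Partrec fun p : BStr => Part.some p)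
  have h1 : Cw (fun p => Part.some p) x ≤ (x.length : ℕ∞) :=
    cw_le (by simp [Part.mem_some_iff])
  have h3 := (hc x).trans (add_le_add_left h1 _)
  intro htop
  rw [htop] at h3
  have h2 : ((x.length : ℕ∞) + (c : ℕ∞)) = ⊤ := top_le_iff.1 h3
  rw [← Nat.cast_add] at h2
  exact (WithTop.natCast_ne_top _) h2

lemma natOfBits_bits (n : ℕ) :
    (Nat.bits n).foldr (fun b m => Nat.bit b m) 0 = n := by
  induction n using Nat.binaryRec' with
  | zero => simp
  | bit b n h ih => rw [Nat.bits_append_bit n b h]; simp [ih]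

lemma bits_injective : Function.Injective Nat.bits :=
  Function.LeftInverse.injective natOfBits_bits

lemma bitsOf_eq (n : ℕ) :
    (List.range n.size).map n.testBit = Nat.bits n := by
  apply List.ext_getElem
  · simp [Nat.size_eq_bits_len]
  · intro i h1 h2
    simp only [List.getElem_map, List.getElem_range]
    rw [Nat.testBit_eq_inth, List.getI_eq_getElem _ h2]

lemma rfind_size (t : ℕ) :
    Nat.rfind (fun k => Part.some (decide (t < 2 ^ k))) = Part.some t.size := by
  rw [Part.eq_some_iff]
  refine Nat.mem_rfind.2 ⟨?_, fun {m} hm => ?_⟩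
  · simp [Part.mem_some_iff, Nat.lt_size_self]
  · have hn : ¬ t < 2 ^ m := fun hlt => absurd (Nat.size_le.2 hlt) (Nat.not_le_of_lt hm)
    simp [Part.mem_some_iff, hn]

lemma bdd_B (D : BStr →. BStr) (k : ℕ) :
    BddAbove {m : ℕ | Cw D (Nat.bits m) ≤ (k : ℕ∞)} := by
  set S := {m : ℕ | Cw D (Nat.bits m) ≤ (k : ℕ∞)} with hSdef
  have hex : ∀ m : ℕ, ∃ p : BStr, m ∈ S → Nat.bits m ∈ D p ∧ p.length ≤ k := by
    intro m
    by_cases hm : m ∈ S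
    · have hne : Cw D (Nat.bits m) ≠ ⊤ := by
        intro htop
        rw [hSdef] at hm
        simp only [Set.mem_setOf_eq, htop, top_le_iff] at hm
        exact (WithTop.natCast_ne_top k) hm
      obtain ⟨p, hp, hlen⟩ := cw_exists hne
      refine ⟨p, fun _ => ⟨hp, ?_⟩⟩
      have : (p.length : ℕ∞) ≤ (k : ℕ∞) := hlen ▸ hm
      exact_mod_cast this
    · exact ⟨[], fun h => absurd h hm⟩
  choose f hf using hex
  have hfin : S.Finite := by
    apply Set.Finite.of_finite_image (f := f)
    · exact Set.Finite.subset (List.finite_length_le Bool k)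
        (by rintro _ ⟨m, hm, rfl⟩; exact (hf m hm).2)
    · intro m hm m' hm' hfe
      have h1 := (hf m hm).1
      have h2 := (hf m' hm').1
      rw [hfe] at h1
      exact bits_injective (Part.mem_unique h1 h2)
  exact hfin.bddAbove

/-- The nonincreasing function `k ↦ C^{B(k)}(x)` stabilizes at the value
`C(x)` no later than `k = C(x) + c`. -/
theorem stmt7 (D : BStr →. BStr) (hD : OptimalDM D) (T : TimedDM D) :
    ∃ c : ℕ, ∀ x : BStr, Cwt T.ev (B D (C D x + c)) x = Cw D x := by
  obtain ⟨c, hc⟩ := hD.2 (timeDM T.ev) (timeDM_partrec T.computable)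
  refine ⟨c, fun x => ?_⟩
  have hxne : Cw D x ≠ ⊤ := cw_ne_top hD x
  obtain ⟨p, hp, hplen⟩ := cw_exists hxne
  have hCx : ((C D x : ℕ) : ℕ∞) = Cw D x := ENat.coe_toNat hxne
  have hdom : ∃ t, (T.ev t p).isSome = true := by
    obtain ⟨t, ht⟩ := (T.spec p x).1 hp
    exact ⟨t, by simp [ht]⟩
  set t0 := Nat.find hdom with ht0def
  have h0 : (T.ev t0 p).isSome = true := Nat.find_spec hdom
  obtain ⟨y, hy⟩ := Option.isSome_iff_exists.1 h0
  have hyx : y = x := Part.mem_unique ((T.spec p y).2 ⟨t0, hy⟩) hp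
  rw [hyx] at hy
  have hrf : t0 ∈ Nat.rfind fun t => Part.some (T.ev t p).isSome := by
    refine Nat.mem_rfind.2 ⟨by simp [Part.mem_some_iff, h0], fun {m} hm => ?_⟩
    have hmin := Nat.find_min hdom hm
    have : (T.ev m p).isSome = false := Bool.eq_false_iff.2 hmin
    simp [Part.mem_some_iff, this]
  have hmem : Nat.bits t0 ∈ timeDM T.ev p := by
    refine Part.mem_bind_iff.2 ⟨t0, hrf, ?_⟩
    rw [rfind_size]
    simp only [Part.map_some, Part.mem_some_iff]
    exact (bitsOf_eq t0).symm
  have hkey : Cw D (Nat.bits t0) ≤ ((C D x + c : ℕ) : ℕ∞) := by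
    calc Cw D (Nat.bits t0) ≤ Cw (timeDM T.ev) (Nat.bits t0) + (c : ℕ∞) := hc _
    _ ≤ (p.length : ℕ∞) + (c : ℕ∞) := add_le_add_left (cw_le hmem) _
    _ = ((C D x + c : ℕ) : ℕ∞) := by rw [hplen, ← hCx, ← Nat.cast_add]
  have ht0B : t0 ≤ B D (C D x + c) := le_csSup (bdd_B D _) hkey
  have hev : T.ev (B D (C D x + c)) p = some x := T.mono ht0B hy
  apply le_antisymm
  · calc Cwt T.ev (B D (C D x + c)) x ≤ (p.length : ℕ∞) := cwt_le hev
    _ = Cw D x := hplen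
  · refine le_iInf₂ fun q hq => ?_
    exact cw_le ((T.spec q x).2 ⟨_, hq⟩)
end

section
/- There exists an optimal description method: there is a partial computable function D from binary strings to binary strings such that for every partial computable function D' from binary strings to binary strings there exists a constant c with C_D(x) ≤ C_{D'}(x) + c for all binary strings x. (Solomonoff–Kolmogorov invariance theorem.) -/
open scoped Classical

section Univ

open Nat.Partrec (Code)
open Nat.Partrec.Code

/-- Universal description method. -/
def myD : BStr →. BStr := fun p =>
  ((Denumerable.ofNat Code (p.findIdx not)).eval
      (Encodable.encode (p.drop (p.findIdx not + 1)))).bind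
    fun m => Part.ofOption (Encodable.decode (α := BStr) m)

theorem drop_primrec : Primrec₂ fun (n : ℕ) (l : BStr) => l.drop n := by
  have : Primrec fun a : ℕ × BStr =>
      Nat.rec (motive := fun _ => BStr) a.2 (fun _ IH => IH.tail) a.1 :=
    Primrec.nat_rec' Primrec.fst Primrec.snd
      ((Primrec.list_tail.comp (Primrec.snd.comp Primrec.snd)).to₂)
  refine this.to₂.of_eq fun n l => ?_
  induction n with
  | zero => rfl
  | succ n ih =>
    show (Nat.rec (motive := fun _ => BStr) l (fun _ IH => IH.tail) n).tail = _
    rw [ih, List.tail_drop]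

theorem findIdx_primrec : Primrec fun p : BStr => p.findIdx not :=
  Primrec.list_findIdx (p := fun _ b => !b) Primrec.id
    (Primrec.not.comp Primrec.snd).to₂

theorem myD_partrec : Partrec myD := by
  have hn : Computable fun p : BStr => p.findIdx not := findIdx_primrec.to_comp
  have hc : Computable fun p : BStr => Denumerable.ofNat Code (p.findIdx not) :=
    (Computable.ofNat Code).comp hn
  have ha : Computable fun p : BStr => Encodable.encode (p.drop (p.findIdx not + 1)) :=
    (Primrec.encode.comp
      (drop_primrec.comp (Primrec.succ.comp findIdx_primrec) Primrec.id)).to_comp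
  have heval : Partrec fun p : BStr =>
      (Denumerable.ofNat Code (p.findIdx not)).eval
        (Encodable.encode (p.drop (p.findIdx not + 1))) :=
    eval_part.comp hc ha
  exact heval.bind
    ((Computable.decode.comp Computable.snd).ofOption)

theorem findIdx_replicate (N : ℕ) (q : BStr) :
    ((List.replicate N true ++ false :: q).findIdx not) = N := by
  induction N with
  | zero => simp [List.findIdx_cons]
  | succ n ih => simp [List.replicate_succ, List.findIdx_cons, ih]

theorem drop_replicate (N : ℕ) (q : BStr) :
    (List.replicate N true ++ false :: q).drop (N + 1) = q := by
  have : List.replicate N true ++ false :: q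
      = (List.replicate N true ++ [false]) ++ q := by simp
  rw [this]
  have hl : (List.replicate N true ++ [false]).length = N + 1 := by simp
  rw [← hl, List.drop_left]

theorem myD_simulates {D' : BStr →. BStr} (hD' : Partrec D') :
    ∃ N : ℕ, ∀ q x : BStr, x ∈ D' q →
      x ∈ myD (List.replicate N true ++ false :: q) := by
  obtain ⟨cc, hcc⟩ := exists_code.1 hD'
  refine ⟨Encodable.encode cc, fun q x hx => ?_⟩
  unfold myD
  rw [findIdx_replicate, drop_replicate, Denumerable.ofNat_encode, hcc]
  simp only [Part.bind_eq_bind, Part.mem_bind_iff]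
  refine ⟨Encodable.encode x, ?_, ?_⟩
  · simp only [Part.mem_bind_iff, Part.mem_coe]
    exact ⟨q, by simp [Encodable.encodek], Part.mem_map Encodable.encode hx⟩
  · simp [Encodable.encodek, Part.mem_ofOption]

theorem Cw_le_of_mem {D : BStr →. BStr} {p x : BStr} (h : x ∈ D p) :
    Cw D x ≤ (p.length : ℕ∞) := by
  rw [Cw]; exact iInf_le_of_le p (iInf_le _ h)

end Univ

/-- **Solomonoff–Kolmogorov invariance theorem**: there exists an optimal
description method. -/
theorem stmt12 :
    ∃ Dopt : BStr →. BStr, Partrec Dopt ∧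
      ∀ D' : BStr →. BStr, Partrec D' →
        ∃ c : ℕ, ∀ x : BStr, Cw Dopt x ≤ Cw D' x + (c : ℕ∞) := by
  refine ⟨myD, myD_partrec, fun D' hD' => ?_⟩
  obtain ⟨N, hN⟩ := myD_simulates hD'
  refine ⟨N + 1, fun x => ?_⟩
  by_cases h : ∃ q : BStr, x ∈ D' q
  · set S : Set ℕ := {n | ∃ q : BStr, q.length = n ∧ x ∈ D' q} with hS
    have hSne : S.Nonempty := by
      obtain ⟨q, hq⟩ := h; exact ⟨q.length, q, rfl, hq⟩
    obtain ⟨q0, hq0len, hq0⟩ := Nat.sInf_mem hSne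
    have h1 : Cw myD x ≤ ((sInf S : ℕ) : ℕ∞) + (N + 1 : ℕ) := by
      have := Cw_le_of_mem (hN q0 x hq0)
      refine this.trans ?_
      have : (List.replicate N true ++ false :: q0).length = q0.length + (N + 1) := by
        simp; omega
      rw [this, hq0len]
      push_cast
      rfl
    have h2 : ((sInf S : ℕ) : ℕ∞) ≤ Cw D' x := by
      rw [Cw]
      refine le_iInf₂ fun q hq => ?_
      have : sInf S ≤ q.length := Nat.sInf_le ⟨q, rfl, hq⟩
      exact_mod_cast this
    exact h1.trans (add_le_add_left h2 _)
  · have : Cw D' x = ⊤ := by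
      rw [Cw]
      simp only [iInf_eq_top]
      intro p hp
      exact absurd ⟨p, hp⟩ h
    rw [this, top_add]
    exact le_top
end
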